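/- With the setup of the previous statement (finite context space X with pmf μ, predictors γ, γ̂ : X → E → [0,1], finite class C of rules, optimal rule c⋆), if γ̂ satisfies the two multicalibration conditions with parameter α = ε/(2m) where m = |E|, then max_{c ∈ C} E_{x∼μ}[ ∑_{e ∈ c(γ(x))} y x e ] ≤ ε + E_{x∼μ}[ ∑_{e ∈ c⋆(γ̂(x))} y x e ]. -/

import Mathlib

/-!
Every rule `c ∈ C` outputs a matching, so on the predicted weights `γ̂ x` the maximum-weight
rule `c⋆` does at least as well as `c (γ x)`. Multicalibration lets us exchange the true
outcomes `y` for `γ̂` on the edge sets chosen by `c` and by `c⋆`, at a cost of `α m = ε / 2` each.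
-/

open Finset

section ExpectedWeight

variable {X E : Type*} [Fintype X]

def expectedWeight (μ : X → ℝ) (w : X → E → ℝ) (S : X → Finset E) : ℝ :=
  ∑ x, μ x * ∑ e ∈ S x, w x e

lemma expectedWeight_sub (μ : X → ℝ) (w v : X → E → ℝ) (S : X → Finset E) :
    expectedWeight μ (w - v) S = expectedWeight μ w S - expectedWeight μ v S := by
  simp only [expectedWeight, Pi.sub_apply, sum_sub_distrib, mul_sub]

lemma expectedWeight_mono {μ : X → ℝ} (hμ : ∀ x, 0 ≤ μ x) {w : X → E → ℝ}
    {S T : X → Finset E} (h : ∀ x, ∑ e ∈ S x, w x e ≤ ∑ e ∈ T x, w x e) :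
    expectedWeight μ w S ≤ expectedWeight μ w T :=
  sum_le_sum fun x _ => mul_le_mul_of_nonneg_left (h x) (hμ x)

lemma expectedWeight_le_add_of_abs_sub_le {μ : X → ℝ} {y γ : X → E → ℝ}
    {S T : X → Finset E} {a b : ℝ}
    (hS : |expectedWeight μ (y - γ) S| ≤ a) (hT : |expectedWeight μ (y - γ) T| ≤ b)
    (h : expectedWeight μ γ S ≤ expectedWeight μ γ T) :
    expectedWeight μ y S ≤ a + b + expectedWeight μ y T := by
  rw [expectedWeight_sub] at hS hT
  linarith [(abs_le.mp hS).2, (abs_le.mp hT).1]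

end ExpectedWeight

theorem multicalibration_matching_eps_general
    {X E : Type*} [Fintype X] [Fintype E]
    (μ : X → ℝ) (hμ0 : ∀ x, 0 ≤ μ x)
    (y : X → E → ℝ)
    (isMatching : Finset E → Prop)
    (C : Finset ((E → ℝ) → Finset E)) (hCne : C.Nonempty)
    (hC : ∀ c ∈ C, ∀ w : E → ℝ, isMatching (c w))
    (cstar : (E → ℝ) → Finset E)
    (hcstarOpt : ∀ (w : E → ℝ) (M : Finset E), isMatching M →
      ∑ e ∈ M, w e ≤ ∑ e ∈ cstar w, w e)
    (γ γhat : X → E → ℝ)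
    (ε α : ℝ) (hm : 0 < Fintype.card E)
    (hαdef : α = ε / (2 * (Fintype.card E)))
    (ha : ∀ c ∈ C,
      |∑ x, μ x * ∑ e ∈ c (γ x), (y x e - γhat x e)| ≤ α * (Fintype.card E))
    (hb : |∑ x, μ x * ∑ e ∈ cstar (γhat x), (y x e - γhat x e)| ≤ α * (Fintype.card E)) :
    (C.sup' hCne fun c => ∑ x, μ x * ∑ e ∈ c (γ x), y x e) ≤
      ε + ∑ x, μ x * ∑ e ∈ cstar (γhat x), y x e := by
  have hαm : α * Fintype.card E = ε / 2 := by
    rw [hαdef]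
    field_simp
  refine sup'_le _ _ fun c hc => ?_
  have hopt : expectedWeight μ γhat (fun x => c (γ x)) ≤
      expectedWeight μ γhat (fun x => cstar (γhat x)) :=
    expectedWeight_mono hμ0 fun x => hcstarOpt (γhat x) _ (hC c hc (γ x))
  have hexchange := expectedWeight_le_add_of_abs_sub_le (ha c hc) hb hopt
  change expectedWeight μ y _ ≤ ε + expectedWeight μ y _
  linarith

/-- Theorem 3.1 with α = ε/(2m): the max over C of the expected weight obtained
by c on γ is at most ε plus the expected weight obtained by c⋆ on γ̂. -/
theorem multicalibration_matching_eps
    {X E : Type*} [Fintype X] [Fintype E]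
    (μ : X → ℝ) (hμ0 : ∀ x, 0 ≤ μ x) (hμ1 : ∑ x, μ x = 1)
    (y : X → E → ℝ) (hy : ∀ x e, y x e ∈ Set.Icc (0:ℝ) 1)
    (isMatching : Finset E → Prop)
    (C : Finset ((E → ℝ) → Finset E)) (hCne : C.Nonempty)
    (hC : ∀ c ∈ C, ∀ w : E → ℝ, isMatching (c w))
    (cstar : (E → ℝ) → Finset E)
    (hcstarM : ∀ w : E → ℝ, isMatching (cstar w))
    (hcstarOpt : ∀ (w : E → ℝ) (M : Finset E), isMatching M →
      ∑ e ∈ M, w e ≤ ∑ e ∈ cstar w, w e)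
    (γ γhat : X → E → ℝ)
    (hγ : ∀ x e, γ x e ∈ Set.Icc (0:ℝ) 1)
    (hγhat : ∀ x e, γhat x e ∈ Set.Icc (0:ℝ) 1)
    (ε α : ℝ) (hε : ε ∈ Set.Ioo (0:ℝ) 1) (hm : 0 < Fintype.card E)
    (hαdef : α = ε / (2 * (Fintype.card E)))
    (ha : ∀ c ∈ C,
      |∑ x, μ x * ∑ e ∈ c (γ x), (y x e - γhat x e)| ≤ α * (Fintype.card E))
    (hb : |∑ x, μ x * ∑ e ∈ cstar (γhat x), (y x e - γhat x e)| ≤ α * (Fintype.card E)) :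
    (C.sup' hCne fun c => ∑ x, μ x * ∑ e ∈ c (γ x), y x e) ≤
      ε + ∑ x, μ x * ∑ e ∈ cstar (γhat x), y x e :=
  multicalibration_matching_eps_general μ hμ0 y isMatching C hCne hC cstar hcstarOpt γ γhat ε α hm
    hαdef ha hb
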